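/- Let A ∈ ℝ^{M×r} and R ∈ ℝ^{M×r'} with r ≤ r' ≤ M, and let b ∈ ℝ^M. Let Q ∈ ℝ^{M×r_Q} (r_Q ≤ r+1) have orthonormal columns spanning the column space of the augmented matrix [A | b], and assume R^T Q has full column rank. If x minimizes ‖R^T A x̂ − R^T b‖₂ over x̂ ∈ ℝ^r and y minimizes ‖A ŷ − b‖₂ over ŷ ∈ ℝ^r, then ‖A x − b‖₂ ≤ κ(R^T Q) · ‖A y − b‖₂, where κ(R^T Q) = σ_max(R^T Q)/σ_min(R^T Q). -/

import Mathlib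

/-! Both residuals `A x - b` and `A y - b` lie in the column space of `Q`, on which `Q` is an
isometry, so with `S = Rᵀ Q` and the optimality of `x` for the sketched problem,
`σ_min(S) ‖A x - b‖ ≤ ‖Rᵀ (A x - b)‖ ≤ ‖Rᵀ (A y - b)‖ ≤ σ_max(S) ‖A y - b‖`. -/

open scoped BigOperators
open MeasureTheory ProbabilityTheory Matrix

noncomputable def enorm2 {n : ℕ} (v : Fin n → ℝ) : ℝ :=
  ‖(WithLp.equiv 2 (Fin n → ℝ)).symm v‖

noncomputable def sMax {m n : ℕ} (A : Matrix (Fin m) (Fin n) ℝ) : ℝ :=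
  ⨆ x : {x : Fin n → ℝ // enorm2 x = 1}, enorm2 (A.mulVec x.1)

noncomputable def sMin {m n : ℕ} (A : Matrix (Fin m) (Fin n) ℝ) : ℝ :=
  ⨅ x : {x : Fin n → ℝ // enorm2 x = 1}, enorm2 (A.mulVec x.1)

section enorm2

variable {m n : ℕ}

lemma enorm2_nonneg (v : Fin n → ℝ) : 0 ≤ enorm2 v := norm_nonneg _

lemma enorm2_pos {v : Fin n → ℝ} (hv : v ≠ 0) : 0 < enorm2 v :=
  norm_pos_iff.mpr fun h => hv (by simpa using congrArg WithLp.ofLp h)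

lemma enorm2_smul (c : ℝ) (v : Fin n → ℝ) : enorm2 (c • v) = |c| * enorm2 v := by
  simp only [enorm2, WithLp.equiv_symm_apply, WithLp.toLp_smul, norm_smul, Real.norm_eq_abs]

lemma enorm2_eq_sqrt_dotProduct (v : Fin n → ℝ) : enorm2 v = √(v ⬝ᵥ v) := by
  simp [enorm2, EuclideanSpace.norm_eq, dotProduct, sq]

lemma enorm2_mulVec_of_transpose_mul_self {Q : Matrix (Fin m) (Fin n) ℝ} (hQ : Qᵀ * Q = 1)
    (w : Fin n → ℝ) : enorm2 (Q *ᵥ w) = enorm2 w := by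
  rw [enorm2_eq_sqrt_dotProduct, enorm2_eq_sqrt_dotProduct, dotProduct_mulVec,
    ← mulVec_transpose, mulVec_mulVec, hQ, one_mulVec]

lemma enorm2_mulVec_le_opNorm (S : Matrix (Fin m) (Fin n) ℝ) (v : Fin n → ℝ) :
    enorm2 (S *ᵥ v) ≤ ‖(toEuclideanLin S).toContinuousLinearMap‖ * enorm2 v :=
  (toEuclideanLin S).toContinuousLinearMap.le_opNorm (WithLp.toLp 2 v)

lemma exists_enorm2_eq_one_and_enorm2_mulVec_eq (S : Matrix (Fin m) (Fin n) ℝ)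
    {v : Fin n → ℝ} (hv : v ≠ 0) :
    ∃ u : Fin n → ℝ, enorm2 u = 1 ∧ enorm2 (S *ᵥ v) = enorm2 v * enorm2 (S *ᵥ u) := by
  have hpos := enorm2_pos hv
  refine ⟨(enorm2 v)⁻¹ • v, ?_, ?_⟩
  · rw [enorm2_smul, abs_inv, abs_of_pos hpos, inv_mul_cancel₀ hpos.ne']
  · rw [mulVec_smul, enorm2_smul, abs_inv, abs_of_pos hpos, mul_inv_cancel_left₀ hpos.ne']

end enorm2

section singularValues

variable {m n : ℕ} (S : Matrix (Fin m) (Fin n) ℝ)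

lemma le_sMax {u : Fin n → ℝ} (hu : enorm2 u = 1) : enorm2 (S *ᵥ u) ≤ sMax S := by
  refine le_ciSup (f := fun x : {x : Fin n → ℝ // enorm2 x = 1} => enorm2 (S *ᵥ x.1))
    ⟨‖(toEuclideanLin S).toContinuousLinearMap‖, ?_⟩ ⟨u, hu⟩
  rintro _ ⟨⟨w, hw⟩, rfl⟩
  simpa [hw] using enorm2_mulVec_le_opNorm S w

lemma sMin_le {u : Fin n → ℝ} (hu : enorm2 u = 1) : sMin S ≤ enorm2 (S *ᵥ u) := by
  refine ciInf_le (f := fun x : {x : Fin n → ℝ // enorm2 x = 1} => enorm2 (S *ᵥ x.1))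
    ⟨0, ?_⟩ ⟨u, hu⟩
  rintro _ ⟨w, rfl⟩
  exact enorm2_nonneg _

lemma enorm2_mulVec_le_sMax_mul (v : Fin n → ℝ) : enorm2 (S *ᵥ v) ≤ sMax S * enorm2 v := by
  rcases eq_or_ne v 0 with rfl | hv
  · simp [enorm2]
  obtain ⟨u, hu, hSv⟩ := exists_enorm2_eq_one_and_enorm2_mulVec_eq S hv
  rw [hSv, mul_comm (sMax S)]
  exact mul_le_mul_of_nonneg_left (le_sMax S hu) (enorm2_nonneg v)

lemma sMin_mul_le_enorm2_mulVec (v : Fin n → ℝ) : sMin S * enorm2 v ≤ enorm2 (S *ᵥ v) := by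
  rcases eq_or_ne v 0 with rfl | hv
  · simp [enorm2]
  obtain ⟨u, hu, hSv⟩ := exists_enorm2_eq_one_and_enorm2_mulVec_eq S hv
  rw [hSv, mul_comm (sMin S)]
  exact mul_le_mul_of_nonneg_left (sMin_le S hu) (enorm2_nonneg v)

end singularValues

lemma sMin_mul_enorm2_le_sMax_mul_of_enorm2_mulVec_le {k m n : ℕ} (S : Matrix (Fin k) (Fin m) ℝ)
    {Q : Matrix (Fin m) (Fin n) ℝ} (hQ : Qᵀ * Q = 1) {u v : Fin n → ℝ}
    (h : enorm2 (S *ᵥ (Q *ᵥ u)) ≤ enorm2 (S *ᵥ (Q *ᵥ v))) :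
    sMin (S * Q) * enorm2 (Q *ᵥ u) ≤ sMax (S * Q) * enorm2 (Q *ᵥ v) := by
  rw [enorm2_mulVec_of_transpose_mul_self hQ, enorm2_mulVec_of_transpose_mul_self hQ]
  calc sMin (S * Q) * enorm2 u ≤ enorm2 ((S * Q) *ᵥ u) := sMin_mul_le_enorm2_mulVec _ u
    _ ≤ enorm2 ((S * Q) *ᵥ v) := by rwa [← mulVec_mulVec, ← mulVec_mulVec]
    _ ≤ sMax (S * Q) * enorm2 v := enorm2_mulVec_le_sMax_mul _ v

theorem stmt_9_general {M r r' rQ : ℕ}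
    (A : Matrix (Fin M) (Fin r) ℝ) (R : Matrix (Fin M) (Fin r') ℝ)
    (b : Fin M → ℝ)
    (Q : Matrix (Fin M) (Fin rQ) ℝ) (TA : Matrix (Fin rQ) (Fin r) ℝ) (Tb : Fin rQ → ℝ)
    (hQ : Qᵀ * Q = 1) (hA : A = Q * TA) (hb : b = Q.mulVec Tb)
    (hfull : 0 < sMin (Rᵀ * Q))
    (x y : Fin r → ℝ)
    (hx : ∀ z : Fin r → ℝ,
      enorm2 (Rᵀ.mulVec (A.mulVec x - b)) ≤ enorm2 (Rᵀ.mulVec (A.mulVec z - b))) :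
    enorm2 (A.mulVec x - b) ≤
      (sMax (Rᵀ * Q) / sMin (Rᵀ * Q)) * enorm2 (A.mulVec y - b) := by
  have hres (z : Fin r → ℝ) : A *ᵥ z - b = Q *ᵥ (TA *ᵥ z - Tb) := by
    rw [hA, hb, mulVec_sub, mulVec_mulVec]
  have hsketch := hx y
  rw [hres, hres] at hsketch ⊢
  rw [div_mul_eq_mul_div, le_div_iff₀ hfull, mul_comm]
  exact sMin_mul_enorm2_le_sMax_mul_of_enorm2_mulVec_le Rᵀ hQ hsketch

theorem stmt_9 {M r r' rQ : ℕ} (hr : r ≤ r') (hr' : r' ≤ M) (hrQ : rQ ≤ r + 1)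
    (A : Matrix (Fin M) (Fin r) ℝ) (R : Matrix (Fin M) (Fin r') ℝ)
    (b : Fin M → ℝ)
    (Q : Matrix (Fin M) (Fin rQ) ℝ) (TA : Matrix (Fin rQ) (Fin r) ℝ) (Tb : Fin rQ → ℝ)
    (hQ : Qᵀ * Q = 1) (hA : A = Q * TA) (hb : b = Q.mulVec Tb)
    (hfull : 0 < sMin (Rᵀ * Q))
    (x y : Fin r → ℝ)
    (hx : ∀ z : Fin r → ℝ,
      enorm2 (Rᵀ.mulVec (A.mulVec x - b)) ≤ enorm2 (Rᵀ.mulVec (A.mulVec z - b)))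
    (hy : ∀ z : Fin r → ℝ,
      enorm2 (A.mulVec y - b) ≤ enorm2 (A.mulVec z - b)) :
    enorm2 (A.mulVec x - b) ≤
      (sMax (Rᵀ * Q) / sMin (Rᵀ * Q)) * enorm2 (A.mulVec y - b) :=
  stmt_9_general A R b Q TA Tb hQ hA hb hfull x y hx
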